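/- arXiv:2206.14649 — 4 statements merged into one kernel-verified Lean document; each statement's English description precedes it below -/
import Mathlib

section
/- Let I be a finite nonempty itemset, R : I → ℝ a score function, and k ∈ I a fixed (positive) item. Define rank_R(k) = |{i ∈ I : R(i) ≥ R(k)}| (which is at least 1 since k itself is counted). Then the log-softmax objective satisfies R(k) - log(∑_{i∈I} exp(R(i))) ≤ log(1 / rank_R(k)); equivalently, -log(∑_{i∈I} exp(R(i) - R(k))) ≤ -log(rank_R(k)). -/
open scoped Classical BigOperators

/-- The log-softmax objective is a lower bound on the log of the reciprocal rank:
`R k - log (∑ i, exp (R i)) ≤ log (1 / rank_R k)`, equivalently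
`-log (∑ i, exp (R i - R k)) ≤ -log (rank_R k)`, where
`rank_R k = |{i : R i ≥ R k}|`. -/
theorem logsoftmax_le_log_mrr {I : Type*} [Fintype I] [Nonempty I]
    (R : I → ℝ) (k : I) :
    R k - Real.log (∑ i, Real.exp (R i)) ≤
      Real.log (1 / ((Finset.univ.filter (fun i => R k ≤ R i)).card : ℝ)) ∧
    -Real.log (∑ i, Real.exp (R i - R k)) ≤
      -Real.log ((Finset.univ.filter (fun i => R k ≤ R i)).card : ℝ) := by
  set F := Finset.univ.filter (fun i => R k ≤ R i) with hF
  have hkF : k ∈ F := by simp [hF]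
  have hcpos : (0 : ℝ) < (F.card : ℝ) := by
    exact_mod_cast Finset.card_pos.mpr ⟨k, hkF⟩
  have hcle : (F.card : ℝ) ≤ ∑ i, Real.exp (R i - R k) := by
    calc (F.card : ℝ) = ∑ i ∈ F, (1 : ℝ) := by simp
      _ ≤ ∑ i ∈ F, Real.exp (R i - R k) := by
          refine Finset.sum_le_sum fun i hi => ?_
          have : R k ≤ R i := by simpa [hF] using hi
          exact Real.one_le_exp (by linarith)
      _ ≤ ∑ i, Real.exp (R i - R k) := by
          exact Finset.sum_le_sum_of_subset_of_nonneg (Finset.subset_univ F)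
            (fun i _ _ => (Real.exp_pos _).le)
  have hlog : Real.log ((F.card : ℝ)) ≤ Real.log (∑ i, Real.exp (R i - R k)) :=
    Real.log_le_log hcpos hcle
  have hsum : (∑ i, Real.exp (R i - R k)) = (∑ i, Real.exp (R i)) / Real.exp (R k) := by
    rw [Finset.sum_div]
    exact Finset.sum_congr rfl fun i _ => by rw [Real.exp_sub]
  have hsumpos : (0 : ℝ) < ∑ i, Real.exp (R i) :=
    Finset.sum_pos (fun i _ => Real.exp_pos _) Finset.univ_nonempty
  have hlogsum : Real.log (∑ i, Real.exp (R i - R k)) =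
      Real.log (∑ i, Real.exp (R i)) - R k := by
    rw [hsum, Real.log_div (ne_of_gt hsumpos) (Real.exp_ne_zero _), Real.log_exp]
  constructor
  · rw [Real.log_div one_ne_zero (ne_of_gt hcpos), Real.log_one]
    linarith
  · linarith
end

section
/- (Theorem 3.1) Let I be a finite nonempty itemset, Y a probability mass function on I with Y(i) > 0 for all i, M : I → ℝ a score function, and T > 0. Let (o_k)_{k≥1} be an i.i.d. sequence of I-valued random variables with common law Y. For each n ≥ 1 and item i ∈ I, define the two-step sampling probability P_n(i) = [∑_{k=1}^n 1(o_k = i)] · exp(M(i)/T - log Y(i)) / ∑_{k=1}^n exp(M(o_k)/T - log Y(o_k)). Then almost surely, for every i ∈ I, P_n(i) converges as n → ∞ to exp(M(i)/T) / ∑_{j∈I} exp(M(j)/T). -/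
open MeasureTheory ProbabilityTheory Filter

/-! By the strong law of large numbers, the empirical frequency of `i` in the pool tends to
`Y i`, and the pool average of the importance weights `exp (M j / T - log (Y j))` tends to their
`Y`-expectation `∑ j, exp (M j / T)`. The factors `1 / n` cancel in `P_n(i)`, and
`Y i * exp (M i / T - log (Y i)) = exp (M i / T)`. -/

section FiniteValued

variable {I Ω : Type*} [Fintype I] [MeasurableSpace I] [MeasurableSingletonClass I]
  [MeasurableSpace Ω] {μ : Measure Ω}

lemma identDistrib_of_measure_preimage_singleton {X X' : Ω → I} (hX : Measurable X)
    (hX' : Measurable X') (h : ∀ i, μ (X ⁻¹' {i}) = μ (X' ⁻¹' {i})) :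
    IdentDistrib X X' μ μ where
  aemeasurable_fst := hX.aemeasurable
  aemeasurable_snd := hX'.aemeasurable
  map_eq := Measure.ext_iff_singleton.2 fun i => by
    rw [Measure.map_apply hX (measurableSet_singleton i),
      Measure.map_apply hX' (measurableSet_singleton i), h]

lemma integral_comp_eq_sum_measureReal [IsFiniteMeasure μ] {X : Ω → I} (hX : Measurable X)
    (f : I → ℝ) : ∫ ω, f (X ω) ∂μ = ∑ j, μ.real (X ⁻¹' {j}) * f j := by
  rw [← integral_map hX.aemeasurable (measurable_of_countable f).aestronglyMeasurable,
    integral_fintype Integrable.of_finite]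
  simp only [map_measureReal_apply hX (measurableSet_singleton _), smul_eq_mul]

theorem tendsto_average_comp_of_iIndepFun [IsFiniteMeasure μ] {X : ℕ → Ω → I}
    (hX : ∀ k, Measurable (X k)) (hindep : iIndepFun X μ)
    (hident : ∀ k i, μ (X k ⁻¹' {i}) = μ (X 0 ⁻¹' {i})) (f : I → ℝ) :
    ∀ᵐ ω ∂μ, Tendsto (fun n : ℕ => (∑ k ∈ Finset.range n, f (X k ω)) / n) atTop
      (nhds (∑ j, μ.real (X 0 ⁻¹' {j}) * f j)) := by
  have hf : Measurable f := measurable_of_countable f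
  rw [← integral_comp_eq_sum_measureReal (hX 0)]
  refine strong_law_ae_real (fun k ω => f (X k ω))
    ((Integrable.of_finite (μ := μ.map (X 0))).comp_measurable (hX 0))
    (fun k l hkl => (hindep.indepFun hkl).comp hf hf) fun k => ?_
  exact (identDistrib_of_measure_preimage_singleton (hX k) (hX 0) (hident k)).comp hf

end FiniteValued

lemma tendsto_mul_div_of_tendsto_div_natCast {a b : ℕ → ℝ} {A B : ℝ} (c : ℝ)
    (ha : Tendsto (fun n : ℕ => a n / n) atTop (nhds A))
    (hb : Tendsto (fun n : ℕ => b n / n) atTop (nhds B)) (hB : B ≠ 0) :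
    Tendsto (fun n => a n * c / b n) atTop (nhds (A * c / B)) := by
  refine ((ha.mul_const c).div hb hB).congr' ?_
  filter_upwards [eventually_ne_atTop 0] with n hn
  change a n / n * c / (b n / n) = _
  rw [div_mul_eq_mul_div, div_div_div_cancel_right₀ (Nat.cast_ne_zero.2 hn)]

lemma mul_exp_sub_log {y : ℝ} (hy : 0 < y) (a : ℝ) :
    y * Real.exp (a - Real.log y) = Real.exp a := by
  rw [Real.exp_sub, Real.exp_log hy, mul_div_cancel₀ _ hy.ne']

theorem two_step_sampler_tendsto_softmax_general {I : Type*} [Fintype I] [DecidableEq I]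
    [MeasurableSpace I] [MeasurableSingletonClass I]
    {Ω : Type*} [MeasurableSpace Ω] (μ : Measure Ω) [IsProbabilityMeasure μ]
    (Y : I → ℝ) (hYpos : ∀ i, 0 < Y i)
    (M : I → ℝ) (T : ℝ)
    (o : ℕ → Ω → I) (homeas : ∀ k, Measurable (o k))
    (hindep : iIndepFun o μ)
    (hlaw : ∀ k i, μ (o k ⁻¹' {i}) = ENNReal.ofReal (Y i)) :
    ∀ᵐ ω ∂μ, ∀ i : I, Tendsto
      (fun n : ℕ =>
        (∑ k ∈ Finset.range n, (if o k ω = i then (1 : ℝ) else 0)) *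
          Real.exp (M i / T - Real.log (Y i)) /
        ∑ k ∈ Finset.range n, Real.exp (M (o k ω) / T - Real.log (Y (o k ω))))
      atTop (nhds (Real.exp (M i / T) / ∑ j, Real.exp (M j / T))) := by
  have hlaw₀ : ∀ j, μ.real (o 0 ⁻¹' {j}) = Y j := fun j => by
    rw [measureReal_def, hlaw, ENNReal.toReal_ofReal (hYpos j).le]
  have hident : ∀ k i, μ (o k ⁻¹' {i}) = μ (o 0 ⁻¹' {i}) := fun k i =>
    (hlaw k i).trans (hlaw 0 i).symm
  have hcount := ae_all_iff.2 fun i => tendsto_average_comp_of_iIndepFun homeas hindep hident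
    fun j => if j = i then (1 : ℝ) else 0
  have hweight := tendsto_average_comp_of_iIndepFun homeas hindep hident
    fun j => Real.exp (M j / T - Real.log (Y j))
  filter_upwards [hcount, hweight] with ω hcountω hweightω i
  have hZ : 0 < ∑ j, Real.exp (M j / T) :=
    Finset.sum_pos (fun j _ => Real.exp_pos _) ⟨i, Finset.mem_univ i⟩
  simp only [hlaw₀, mul_ite, mul_one, mul_zero, Finset.sum_ite_eq', Finset.mem_univ, if_true,
    mul_exp_sub_log (hYpos _)] at hcountω hweightω
  rw [← mul_exp_sub_log (hYpos i) (M i / T)]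
  exact tendsto_mul_div_of_tendsto_div_natCast _ (hcountω i) hweightω hZ.ne'

/-- Theorem 3.1: as the pool size `n → ∞`, the two-step sampler's selection probability
`P_n(i) = (#{k < n : o k = i}) · exp (M i / T - log (Y i)) / ∑_{k<n} exp (M (o k) / T - log (Y (o k)))`
converges almost surely, for every item `i`, to the tempered softmax
`Q(i) = exp (M i / T) / ∑ j, exp (M j / T)`. -/
theorem two_step_sampler_tendsto_softmax {I : Type*} [Fintype I] [Nonempty I] [DecidableEq I]
    [MeasurableSpace I] [MeasurableSingletonClass I]
    {Ω : Type*} [MeasurableSpace Ω] (μ : Measure Ω) [IsProbabilityMeasure μ]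
    (Y : I → ℝ) (hYpos : ∀ i, 0 < Y i) (hYsum : ∑ i, Y i = 1)
    (M : I → ℝ) (T : ℝ) (hT : 0 < T)
    (o : ℕ → Ω → I) (homeas : ∀ k, Measurable (o k))
    (hindep : iIndepFun o μ)
    (hlaw : ∀ k i, μ (o k ⁻¹' {i}) = ENNReal.ofReal (Y i)) :
    ∀ᵐ ω ∂μ, ∀ i : I, Tendsto
      (fun n : ℕ =>
        (∑ k ∈ Finset.range n, (if o k ω = i then (1 : ℝ) else 0)) *
          Real.exp (M i / T - Real.log (Y i)) /
        ∑ k ∈ Finset.range n, Real.exp (M (o k ω) / T - Real.log (Y (o k ω))))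
      atTop (nhds (Real.exp (M i / T) / ∑ j, Real.exp (M j / T))) :=
  two_step_sampler_tendsto_softmax_general μ Y hYpos M T o homeas hindep hlaw
end

section
/- (Theorem 3.2) Let I be a finite nonempty itemset, R : I → ℝ and M : I → ℝ score functions, P = softmax(R) and Q = softmax(M) the corresponding softmax distributions on I, and Q₀ a probability mass function on I with Q₀(i) > 0 for all i. Let (o_k)_{k≥1} be i.i.d. with law Q₀. For each L, define distributions over the sample indices {1,…,L}: P_S(j) = exp(R(o_j) - log Q₀(o_j)) / ∑_{k=1}^L exp(R(o_k) - log Q₀(o_k)) and Q_S(j) = exp(M(o_j) - log Q₀(o_j)) / ∑_{k=1}^L exp(M(o_k) - log Q₀(o_k)). Then almost surely the sampled KL divergence ∑_{j=1}^L P_S(j) log(P_S(j)/Q_S(j)) converges as L → ∞ to the full KL divergence ∑_{i∈I} P(i) log(P(i)/Q(i)). -/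
/-! Writing `Z_r = ∑ exp r`, the KL divergence of `softmax r` from `softmax m` is
`(∑ exp r · (r - m)) / Z_r + log Z_m - log Z_r`, a continuous function of three sums that is
unchanged when all three are scaled by the same positive factor. For the importance-adjusted
sampled scores, `1/L` times each sum is an empirical mean of a function of the samples `o_j`; by
the strong law it converges almost surely to its `Q₀`-expectation, in which the factor `1/Q₀`
cancels the sampling density and leaves the corresponding sum over the whole itemset. -/

open MeasureTheory ProbabilityTheory Filter Real Finset

noncomputable def softmaxKL {ι : Type*} (s : Finset ι) (r m : ι → ℝ) : ℝ :=
  ∑ j ∈ s, (exp (r j) / ∑ k ∈ s, exp (r k)) *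
    log ((exp (r j) / ∑ k ∈ s, exp (r k)) / (exp (m j) / ∑ k ∈ s, exp (m k)))

theorem softmaxKL_eq {ι : Type*} (s : Finset ι) (r m : ι → ℝ) :
    softmaxKL s r m = (∑ j ∈ s, exp (r j) * (r j - m j)) / (∑ k ∈ s, exp (r k)) +
      (log (∑ k ∈ s, exp (m k)) - log (∑ k ∈ s, exp (r k))) := by
  rcases s.eq_empty_or_nonempty with rfl | hs
  · simp [softmaxKL]
  set Zr := ∑ k ∈ s, exp (r k)
  set Zm := ∑ k ∈ s, exp (m k)
  have hZr : 0 < Zr := sum_pos (fun k _ => exp_pos _) hs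
  have hZm : 0 < Zm := sum_pos (fun k _ => exp_pos _) hs
  have hterm : ∀ j ∈ s, (exp (r j) / Zr) * log ((exp (r j) / Zr) / (exp (m j) / Zm)) =
      exp (r j) * (r j - m j) / Zr + exp (r j) / Zr * (log Zm - log Zr) := by
    intro j _
    rw [log_div (by positivity) (by positivity), log_div (exp_ne_zero _) hZr.ne',
      log_div (exp_ne_zero _) hZm.ne', log_exp, log_exp]
    ring
  rw [softmaxKL, sum_congr rfl hterm, sum_add_distrib, ← sum_div, ← sum_mul, ← sum_div,
    div_self hZr.ne', one_mul]

theorem tendsto_softmaxKL {ι α : Type*} {l : Filter α} {s : α → Finset ι} {r m : α → ι → ℝ}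
    {c : α → ℝ} {A B C : ℝ} (hA : 0 < A) (hB : 0 < B)
    (hr : Tendsto (fun a => c a * ∑ j ∈ s a, exp (r a j)) l (nhds A))
    (hm : Tendsto (fun a => c a * ∑ j ∈ s a, exp (m a j)) l (nhds B))
    (hrm : Tendsto (fun a => c a * ∑ j ∈ s a, exp (r a j) * (r a j - m a j)) l (nhds C)) :
    Tendsto (fun a => softmaxKL (s a) (r a) (m a)) l (nhds (C / A + (log B - log A))) := by
  have hlim := (hrm.div hr hA.ne').add
    (((continuousAt_log hB.ne').tendsto.comp hm).sub ((continuousAt_log hA.ne').tendsto.comp hr))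
  refine hlim.congr' ?_
  filter_upwards [hr.eventually (lt_mem_nhds hA), hm.eventually (lt_mem_nhds hB)]
    with a hra hma
  have hc : c a ≠ 0 := left_ne_zero_of_mul hra.ne'
  simp only [Pi.div_apply, Function.comp_apply, softmaxKL_eq, mul_div_mul_left _ _ hc,
    log_mul hc (right_ne_zero_of_mul hra.ne'), log_mul hc (right_ne_zero_of_mul hma.ne')]
  ring

theorem identDistrib_of_measure_preimage_singleton_s6 {I Ω Ω' : Type*} [Countable I]
    [MeasurableSpace I] [MeasurableSingletonClass I] [MeasurableSpace Ω] [MeasurableSpace Ω']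
    {μ : Measure Ω} {ν : Measure Ω'} {X : Ω → I} {Y : Ω' → I}
    (hX : Measurable X) (hY : Measurable Y) (h : ∀ i, μ (X ⁻¹' {i}) = ν (Y ⁻¹' {i})) :
    IdentDistrib X Y μ ν :=
  ⟨hX.aemeasurable, hY.aemeasurable, Measure.ext_of_singleton fun i => by
    rw [Measure.map_apply hX (measurableSet_singleton i),
      Measure.map_apply hY (measurableSet_singleton i), h]⟩

theorem strong_law_ae_comp_of_fintype {I Ω : Type*} [Fintype I] [MeasurableSpace I]
    [MeasurableSingletonClass I] [MeasurableSpace Ω] {μ : Measure Ω} [IsFiniteMeasure μ]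
    {X : ℕ → Ω → I} (hX : ∀ k, Measurable (X k)) (hindep : Pairwise fun i j => IndepFun (X i) (X j) μ)
    (hident : ∀ k, IdentDistrib (X k) (X 0) μ μ) (f : I → ℝ) :
    ∀ᵐ ω ∂μ, Tendsto (fun L : ℕ => (L : ℝ)⁻¹ * ∑ j ∈ range L, f (X j ω)) atTop
      (nhds (∑ i, μ.real (X 0 ⁻¹' {i}) * f i)) := by
  have hf : Measurable f := measurable_of_finite f
  have hint : Integrable f (μ.map (X 0)) := Integrable.of_finite
  have hmean : ∫ ω, f (X 0 ω) ∂μ = ∑ i, μ.real (X 0 ⁻¹' {i}) * f i := by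
    rw [← integral_map (hX 0).aemeasurable hf.aestronglyMeasurable, integral_fintype hint]
    simp [map_measureReal_apply (hX 0) (measurableSet_singleton _)]
  simpa [hmean] using strong_law_ae (fun k => f ∘ X k) (hint.comp_measurable (hX 0))
    (fun i j hij => (hindep hij).comp hf hf) (fun k => (hident k).comp hf)

theorem sampled_KL_tendsto_KL_general {I : Type*} [Fintype I] [Nonempty I]
    [MeasurableSpace I] [MeasurableSingletonClass I]
    {Ω : Type*} [MeasurableSpace Ω] (μ : Measure Ω) [IsProbabilityMeasure μ]
    (Q₀ : I → ℝ) (hQpos : ∀ i, 0 < Q₀ i)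
    (R M : I → ℝ)
    (o : ℕ → Ω → I) (homeas : ∀ k, Measurable (o k))
    (hindep : iIndepFun o μ)
    (hlaw : ∀ k i, μ (o k ⁻¹' {i}) = ENNReal.ofReal (Q₀ i)) :
    ∀ᵐ ω ∂μ, Tendsto
      (fun L : ℕ =>
        ∑ j ∈ Finset.range L,
          (Real.exp (R (o j ω) - Real.log (Q₀ (o j ω))) /
            ∑ k ∈ Finset.range L, Real.exp (R (o k ω) - Real.log (Q₀ (o k ω)))) *
          Real.log
            ((Real.exp (R (o j ω) - Real.log (Q₀ (o j ω))) /
                ∑ k ∈ Finset.range L, Real.exp (R (o k ω) - Real.log (Q₀ (o k ω)))) /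
             (Real.exp (M (o j ω) - Real.log (Q₀ (o j ω))) /
                ∑ k ∈ Finset.range L, Real.exp (M (o k ω) - Real.log (Q₀ (o k ω))))))
      atTop
      (nhds (∑ i,
        (Real.exp (R i) / ∑ j, Real.exp (R j)) *
          Real.log ((Real.exp (R i) / ∑ j, Real.exp (R j)) /
            (Real.exp (M i) / ∑ j, Real.exp (M j))))) := by
  have hlaw_real : ∀ i, μ.real (o 0 ⁻¹' {i}) = Q₀ i := fun i => by
    rw [measureReal_def, hlaw, ENNReal.toReal_ofReal (hQpos i).le]
  have hmean (f : I → ℝ) : ∀ᵐ ω ∂μ, Tendsto (fun L : ℕ => (L : ℝ)⁻¹ * ∑ j ∈ range L, f (o j ω))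
      atTop (nhds (∑ i, Q₀ i * f i)) := by
    simpa only [hlaw_real] using strong_law_ae_comp_of_fintype homeas
      (fun i j hij => hindep.indepFun hij)
      (fun k => identDistrib_of_measure_preimage_singleton_s6 (homeas k) (homeas 0) fun i => by
        rw [hlaw, hlaw]) f
  have hweight (S : I → ℝ) (i : I) : Q₀ i * exp (S i - log (Q₀ i)) = exp (S i) := by
    rw [exp_sub, exp_log (hQpos i), mul_div_cancel₀ _ (hQpos i).ne']
  filter_upwards [hmean fun i => exp (R i - log (Q₀ i)), hmean fun i => exp (M i - log (Q₀ i)),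
    hmean fun i => exp (R i - log (Q₀ i)) * (R i - M i)] with ω hR hM hRM
  simp only [← mul_assoc, hweight] at hR hM hRM
  have hsampled := tendsto_softmaxKL (s := range)
    (sum_pos (fun i _ => exp_pos (R i)) univ_nonempty)
    (sum_pos (fun i _ => exp_pos (M i)) univ_nonempty) hR hM
    (by simpa only [sub_sub_sub_cancel_right] using hRM)
  rwa [← softmaxKL_eq] at hsampled

/-- Theorem 3.2: the sampled KL divergence converges almost surely to the full KL
divergence. Here `o₁, o₂, …` are i.i.d. with full-support proposal law `Q₀`,
`P_S(j) ∝ exp (R (o j) - log (Q₀ (o j)))` and `Q_S(j) ∝ exp (M (o j) - log (Q₀ (o j)))`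
are distributions over the sample indices `{0, …, L-1}`, and
`P = softmax R`, `Q = softmax M` on the full itemset. -/
theorem sampled_KL_tendsto_KL {I : Type*} [Fintype I] [Nonempty I]
    [MeasurableSpace I] [MeasurableSingletonClass I]
    {Ω : Type*} [MeasurableSpace Ω] (μ : Measure Ω) [IsProbabilityMeasure μ]
    (Q₀ : I → ℝ) (hQpos : ∀ i, 0 < Q₀ i) (hQsum : ∑ i, Q₀ i = 1)
    (R M : I → ℝ)
    (o : ℕ → Ω → I) (homeas : ∀ k, Measurable (o k))
    (hindep : iIndepFun o μ)
    (hlaw : ∀ k i, μ (o k ⁻¹' {i}) = ENNReal.ofReal (Q₀ i)) :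
    ∀ᵐ ω ∂μ, Tendsto
      (fun L : ℕ =>
        ∑ j ∈ Finset.range L,
          (Real.exp (R (o j ω) - Real.log (Q₀ (o j ω))) /
            ∑ k ∈ Finset.range L, Real.exp (R (o k ω) - Real.log (Q₀ (o k ω)))) *
          Real.log
            ((Real.exp (R (o j ω) - Real.log (Q₀ (o j ω))) /
                ∑ k ∈ Finset.range L, Real.exp (R (o k ω) - Real.log (Q₀ (o k ω)))) /
             (Real.exp (M (o j ω) - Real.log (Q₀ (o j ω))) /
                ∑ k ∈ Finset.range L, Real.exp (M (o k ω) - Real.log (Q₀ (o k ω))))))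
      atTop
      (nhds (∑ i,
        (Real.exp (R i) / ∑ j, Real.exp (R j)) *
          Real.log ((Real.exp (R i) / ∑ j, Real.exp (R j)) /
            (Real.exp (M i) / ∑ j, Real.exp (M j))))) :=
  sampled_KL_tendsto_KL_general μ Q₀ hQpos R M o homeas hindep hlaw
end

section
/- (Corollary 3.3) Let I be a finite nonempty itemset, R, M : I → ℝ score functions, P = softmax(R) and Q = softmax(M) the corresponding softmax distributions on I. Let (o_k)_{k≥1} be i.i.d. with law Q. For each L define the vector Δ^L ∈ ℝ^L with entries Δ^L_j = R(o_j) - M(o_j), j = 1,…,L. Then almost surely, log L - H(softmax(Δ^L)) converges as L → ∞ to the KL divergence ∑_{i∈I} P(i) log(P(i)/Q(i)), where H(p) = -∑_j p_j log p_j is the Shannon entropy and softmax(Δ)_j = exp(Δ_j)/∑_k exp(Δ_k). -/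
/-!
Write `Δ = R - M`. Both sides are the same function `B / A - log A` of two first moments
of the tilt `exp Δ`: the left side (after cancelling `L`) of the empirical averages
`A_L = L⁻¹ ∑ exp Δ(o_j)` and `B_L = L⁻¹ ∑ exp Δ(o_j) · Δ(o_j)`, the Kullback–Leibler divergence of
their `Q`-expectations, because `P` is the exponential tilt of `Q` by `Δ`. The strong law of large
numbers gives `A_L → E_Q[exp Δ] > 0` and `B_L → E_Q[exp Δ · Δ]` almost surely, and
`(A, B) ↦ B / A - log A` is continuous wherever `A > 0`.
-/

open Finset Real MeasureTheory ProbabilityTheory Filter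

noncomputable def softmax {α : Type*} (s : Finset α) (x : α → ℝ) (j : α) : ℝ :=
  exp (x j) / ∑ k ∈ s, exp (x k)

noncomputable def expTilt {α : Type*} (s : Finset α) (w x : α → ℝ) (j : α) : ℝ :=
  w j * exp (x j) / ∑ k ∈ s, w k * exp (x k)

section Tilt

variable {α : Type*} (s : Finset α) (w x : α → ℝ)

theorem sum_expTilt_mul_log_expTilt_div :
    ∑ j ∈ s, expTilt s w x j * log (expTilt s w x j / w j) =
      (∑ j ∈ s, w j * (exp (x j) * x j)) / (∑ j ∈ s, w j * exp (x j)) -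
        log (∑ j ∈ s, w j * exp (x j)) := by
  simp only [expTilt]
  set Z := ∑ j ∈ s, w j * exp (x j)
  by_cases hZ : Z = 0
  · simp [hZ]
  have hterm : ∀ j, w j * exp (x j) / Z * log (w j * exp (x j) / Z / w j) =
      w j * (exp (x j) * x j) / Z - w j * exp (x j) / Z * log Z := by
    intro j
    rcases eq_or_ne (w j) 0 with hw | hw
    · simp [hw]
    rw [mul_div_assoc, mul_div_cancel_left₀ _ hw, log_div (exp_ne_zero _) hZ, log_exp]
    ring
  rw [sum_congr rfl fun j _ => hterm j, sum_sub_distrib, ← sum_div, ← sum_mul, ← sum_div,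
    div_self hZ, one_mul]

theorem expTilt_one : expTilt s 1 x = softmax s x := by
  ext j
  simp [expTilt, softmax]

theorem expTilt_softmax (y : α → ℝ) : expTilt s (softmax s y) x = softmax s (y + x) := by
  ext j
  rcases s.eq_empty_or_nonempty with rfl | hs
  · simp [expTilt, softmax]
  have hZ : ∑ k ∈ s, exp (y k) ≠ 0 := (sum_pos (fun k _ => exp_pos (y k)) hs).ne'
  simp only [expTilt, softmax, Pi.add_apply, exp_add, div_mul_eq_mul_div, ← sum_div]
  rw [div_div_div_cancel_right₀ hZ]

theorem sum_softmax_mul_log_softmax :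
    ∑ j ∈ s, softmax s x j * log (softmax s x j) =
      (∑ j ∈ s, exp (x j) * x j) / (∑ j ∈ s, exp (x j)) - log (∑ j ∈ s, exp (x j)) := by
  simpa [expTilt_one] using sum_expTilt_mul_log_expTilt_div s 1 x

theorem sum_softmax_mul_log_softmax_div_softmax (y : α → ℝ) :
    ∑ j ∈ s, softmax s x j * log (softmax s x j / softmax s y j) =
      (∑ j ∈ s, softmax s y j * (exp (x j - y j) * (x j - y j))) /
          (∑ j ∈ s, softmax s y j * exp (x j - y j)) -
        log (∑ j ∈ s, softmax s y j * exp (x j - y j)) := by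
  have := sum_expTilt_mul_log_expTilt_div s (softmax s y) (x - y)
  rwa [expTilt_softmax, add_sub_cancel] at this

theorem log_card_sub_entropy_softmax (hs : s.Nonempty) :
    log #s - -∑ j ∈ s, softmax s x j * log (softmax s x j) =
      ((∑ j ∈ s, exp (x j) * x j) / #s) / ((∑ j ∈ s, exp (x j)) / #s) -
        log ((∑ j ∈ s, exp (x j)) / #s) := by
  have hZ : ∑ j ∈ s, exp (x j) ≠ 0 := (sum_pos (fun k _ => exp_pos (x k)) hs).ne'
  have hcard : (#s : ℝ) ≠ 0 := by exact_mod_cast hs.card_pos.ne'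
  rw [sum_softmax_mul_log_softmax, div_div_div_cancel_right₀ hcard, log_div hZ hcard]
  ring

end Tilt

theorem integral_comp_eq_sum_measureReal_preimage {I Ω : Type*} [Fintype I] [MeasurableSpace I]
    [MeasurableSingletonClass I] [MeasurableSpace Ω] {μ : Measure Ω} [IsFiniteMeasure μ]
    {X : Ω → I} (hX : Measurable X) (g : I → ℝ) :
    ∫ ω, g (X ω) ∂μ = ∑ i, μ.real (X ⁻¹' {i}) * g i := by
  rw [← integral_map hX.aemeasurable (measurable_of_countable g).aestronglyMeasurable,
    integral_fintype .of_finite]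
  simp [Measure.real, Measure.map_apply hX (measurableSet_singleton _)]

theorem ae_tendsto_average_comp_of_iIndepFun {I Ω : Type*} [Fintype I] [MeasurableSpace I]
    [MeasurableSingletonClass I] [MeasurableSpace Ω] {μ : Measure Ω} [IsFiniteMeasure μ]
    {X : ℕ → Ω → I} (hX : ∀ k, Measurable (X k)) (hindep : iIndepFun X μ)
    (hident : ∀ k, IdentDistrib (X k) (X 0) μ μ) (g : I → ℝ) :
    ∀ᵐ ω ∂μ, Tendsto (fun L : ℕ => (∑ j ∈ range L, g (X j ω)) / L) atTop
      (nhds (∑ i, μ.real (X 0 ⁻¹' {i}) * g i)) := by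
  have hg : Measurable g := measurable_of_countable g
  rw [← integral_comp_eq_sum_measureReal_preimage (hX 0)]
  exact strong_law_ae_real (fun k ω => g (X k ω))
    ((integrable_map_measure hg.aestronglyMeasurable (hX 0).aemeasurable).mp .of_finite)
    (fun i j hij => (hindep.indepFun hij).comp hg hg) (fun k => (hident k).comp hg)

/-- Corollary 3.3: if the samples `o₁, o₂, …` are drawn i.i.d. exactly from the
retriever's softmax distribution `Q = softmax M`, then, writing
`Δ^L_j = R (o j) - M (o j)` for `j < L`, the quantity `log L - H(softmax Δ^L)`
converges almost surely to `D_KL(P ‖ Q)` with `P = softmax R`. -/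
theorem logL_sub_entropy_tendsto_KL {I : Type*} [Fintype I] [Nonempty I]
    [MeasurableSpace I] [MeasurableSingletonClass I]
    {Ω : Type*} [MeasurableSpace Ω] (μ : Measure Ω) [IsProbabilityMeasure μ]
    (R M : I → ℝ)
    (o : ℕ → Ω → I) (homeas : ∀ k, Measurable (o k))
    (hindep : iIndepFun o μ)
    (hlaw : ∀ k i, μ (o k ⁻¹' {i}) =
      ENNReal.ofReal (Real.exp (M i) / ∑ j, Real.exp (M j))) :
    ∀ᵐ ω ∂μ, Tendsto
      (fun L : ℕ =>
        Real.log L -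
          (-(∑ j ∈ Finset.range L,
              (Real.exp (R (o j ω) - M (o j ω)) /
                  ∑ k ∈ Finset.range L, Real.exp (R (o k ω) - M (o k ω))) *
                Real.log
                  (Real.exp (R (o j ω) - M (o j ω)) /
                    ∑ k ∈ Finset.range L, Real.exp (R (o k ω) - M (o k ω))))))
      atTop
      (nhds (∑ i,
        (Real.exp (R i) / ∑ j, Real.exp (R j)) *
          Real.log ((Real.exp (R i) / ∑ j, Real.exp (R j)) /
            (Real.exp (M i) / ∑ j, Real.exp (M j))))) := by
  have hident : ∀ k, IdentDistrib (o k) (o 0) μ μ := fun k =>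
    ⟨(homeas k).aemeasurable, (homeas 0).aemeasurable, Measure.ext_of_singleton fun i => by
      rw [Measure.map_apply (homeas k) (measurableSet_singleton i),
        Measure.map_apply (homeas 0) (measurableSet_singleton i), hlaw, hlaw]⟩
  have hQ : ∀ i, μ.real (o 0 ⁻¹' {i}) = softmax univ M i := fun i => by
    rw [Measure.real, hlaw, ENNReal.toReal_ofReal (by positivity), softmax]
  have ha : 0 < ∑ i, softmax univ M i * exp (R i - M i) := by unfold softmax; positivity
  have hA := ae_tendsto_average_comp_of_iIndepFun homeas hindep hident fun i => exp (R i - M i)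
  have hB := ae_tendsto_average_comp_of_iIndepFun homeas hindep hident
    fun i => exp (R i - M i) * (R i - M i)
  simp only [hQ] at hA hB
  filter_upwards [hA, hB] with ω hAω hBω
  change Tendsto _ atTop (nhds (∑ i, softmax univ R i * log (softmax univ R i / softmax univ M i)))
  rw [sum_softmax_mul_log_softmax_div_softmax]
  refine ((hBω.div hAω ha.ne').sub (hAω.log ha.ne')).congr' ?_
  filter_upwards [eventually_ge_atTop 1] with L hL
  have hsample := log_card_sub_entropy_softmax (range L) (fun j => R (o j ω) - M (o j ω))
    (nonempty_range_iff.2 (by omega))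
  rw [card_range] at hsample
  exact hsample.symm
end
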